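/- arXiv:1705.06719 — 3 statements merged into one kernel-verified Lean document; each statement's English description precedes it below -/
import Mathlib

section
/- For two qubits, with Q = (I - X⊗X)/2, W = (I - Y⊗Y)/2, R = (I - Z⊗Z)/2, every product state ρ = ρ_1 ⊗ ρ_2 satisfies tr(ρ·(Q + W + R)/3) ≤ 2/3. -/
open Matrix Kronecker ComplexOrder

noncomputable def PX : Matrix (Fin 2) (Fin 2) ℂ := !![0, 1; 1, 0]
noncomputable def PY : Matrix (Fin 2) (Fin 2) ℂ := !![0, -Complex.I; Complex.I, 0]
noncomputable def PZ : Matrix (Fin 2) (Fin 2) ℂ := !![1, 0; 0, -1]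

/-- Projector onto the −1 outcome of `X⊗X`. -/
noncomputable def Qop : Matrix (Fin 2 × Fin 2) (Fin 2 × Fin 2) ℂ :=
  ((1 : ℂ)/2) • ((1 : Matrix (Fin 2 × Fin 2) (Fin 2 × Fin 2) ℂ) - PX ⊗ₖ PX)

/-- Projector onto the −1 outcome of `Y⊗Y`. -/
noncomputable def Wop : Matrix (Fin 2 × Fin 2) (Fin 2 × Fin 2) ℂ :=
  ((1 : ℂ)/2) • ((1 : Matrix (Fin 2 × Fin 2) (Fin 2 × Fin 2) ℂ) - PY ⊗ₖ PY)

/-- Projector onto the −1 outcome of `Z⊗Z`. -/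
noncomputable def Rop : Matrix (Fin 2 × Fin 2) (Fin 2 × Fin 2) ℂ :=
  ((1 : ℂ)/2) • ((1 : Matrix (Fin 2 × Fin 2) (Fin 2 × Fin 2) ℂ) - PZ ⊗ₖ PZ)

/-!
Since `Q + W + R = (3 - (X⊗X + Y⊗Y + Z⊗Z)) / 2` and `tr((ρ₁ ⊗ ρ₂)(σ ⊗ σ)) = tr(ρ₁σ) tr(ρ₂σ)`,
the witness value of `ρ₁ ⊗ ρ₂` is `1/2 - ⟪r₁, r₂⟫/6`, where `rᵢ` is the Bloch vector of `ρᵢ`.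
Positivity of a qubit density matrix forces `‖rᵢ‖ ≤ 1`, so Cauchy–Schwarz gives `⟪r₁, r₂⟫ ≥ -1`.
-/

lemma Matrix.IsHermitian.im_trace_mul_eq_zero {n : Type*} [Fintype n] {A B : Matrix n n ℂ}
    (hA : A.IsHermitian) (hB : B.IsHermitian) : (A * B).trace.im = 0 := by
  rw [← Complex.conj_eq_iff_im, starRingEnd_apply, ← trace_conjTranspose, conjTranspose_mul,
    hA.eq, hB.eq, trace_mul_comm]

lemma isHermitian_PX : PX.IsHermitian := by
  ext i j; fin_cases i <;> fin_cases j <;> simp [PX]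

lemma isHermitian_PY : PY.IsHermitian := by
  ext i j; fin_cases i <;> fin_cases j <;> simp [PY]

lemma isHermitian_PZ : PZ.IsHermitian := by
  ext i j; fin_cases i <;> fin_cases j <;> simp [PZ]

noncomputable def pauliCorrelation : Matrix (Fin 2 × Fin 2) (Fin 2 × Fin 2) ℂ :=
  PX ⊗ₖ PX + PY ⊗ₖ PY + PZ ⊗ₖ PZ

lemma Qop_add_Wop_add_Rop :
    Qop + Wop + Rop = ((3 : ℂ) / 2) • 1 - ((1 : ℂ) / 2) • pauliCorrelation := by
  simp only [Qop, Wop, Rop, pauliCorrelation]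
  module

noncomputable def blochVector (ρ : Matrix (Fin 2) (Fin 2) ℂ) : EuclideanSpace ℝ (Fin 3) :=
  !₂[(ρ * PX).trace.re, (ρ * PY).trace.re, (ρ * PZ).trace.re]

lemma inner_blochVector (ρ σ : Matrix (Fin 2) (Fin 2) ℂ) :
    inner ℝ (blochVector ρ) (blochVector σ) =
      (ρ * PX).trace.re * (σ * PX).trace.re + (ρ * PY).trace.re * (σ * PY).trace.re
        + (ρ * PZ).trace.re * (σ * PZ).trace.re := by
  simp only [blochVector, PiLp.inner_apply, RCLike.inner_apply, Real.ringHom_apply,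
    Fin.sum_univ_three, Fin.isValue, cons_val_zero, cons_val_one, cons_val]
  ring

lemma norm_sq_blochVector (ρ : Matrix (Fin 2) (Fin 2) ℂ) :
    ‖blochVector ρ‖ ^ 2 =
      (ρ * PX).trace.re ^ 2 + (ρ * PY).trace.re ^ 2 + (ρ * PZ).trace.re ^ 2 := by
  simp [EuclideanSpace.norm_sq_eq, blochVector, Fin.sum_univ_three]

/-- With `ρ = !![a, b; conj b, d]`, `‖r‖² = 4|b|² + (a - d)² ≤ 4ad + (a - d)² = (a + d)² = 1`,
the inequality being `det ρ ≥ 0`. -/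
lemma norm_blochVector_le_one {ρ : Matrix (Fin 2) (Fin 2) ℂ} (h : ρ.PosSemidef)
    (ht : ρ.trace = 1) : ‖blochVector ρ‖ ≤ 1 := by
  have h00 := h.1.apply 0 0
  have h11 := h.1.apply 1 1
  have h10 := h.1.apply 1 0
  have hdet := h.det_nonneg
  rw [det_fin_two, Complex.le_def] at hdet
  rw [trace_fin_two] at ht
  simp only [Complex.ext_iff] at h00 h11 h10 ht
  rw [← sq_le_one_iff₀ (norm_nonneg _), norm_sq_blochVector]
  simp only [PX, PY, PZ, trace_fin_two, mul_apply, Fin.sum_univ_two, of_apply, cons_val',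
    cons_val_zero, cons_val_one, cons_val_fin_one, Fin.isValue, mul_zero, mul_one, zero_add,
    add_zero, mul_neg, zero_sub, sub_nonneg, RCLike.star_def, Complex.conj_re, Complex.conj_im,
    Complex.add_re, Complex.add_im, Complex.sub_re, Complex.sub_im, Complex.mul_re,
    Complex.mul_im, Complex.neg_re, Complex.zero_re, Complex.zero_im, Complex.one_re,
    Complex.one_im, Complex.I_re, Complex.I_im, neg_neg] at hdet h00 h11 h10 ht ⊢
  nlinarith [hdet.1]

lemma re_trace_kronecker_mul_pauliCorrelation {ρ σ : Matrix (Fin 2) (Fin 2) ℂ}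
    (hρ : ρ.IsHermitian) (hσ : σ.IsHermitian) :
    ((ρ ⊗ₖ σ) * pauliCorrelation).trace.re = inner ℝ (blochVector ρ) (blochVector σ) := by
  simp only [pauliCorrelation, mul_add, trace_add, ← mul_kronecker_mul, trace_kronecker,
    Complex.add_re, Complex.mul_re, inner_blochVector, isHermitian_PX, isHermitian_PY,
    isHermitian_PZ, hρ.im_trace_mul_eq_zero, hσ.im_trace_mul_eq_zero]
  ring

lemma re_trace_kronecker_mul_witness {ρ σ : Matrix (Fin 2) (Fin 2) ℂ}
    (hρ : ρ.IsHermitian) (htρ : ρ.trace = 1) (hσ : σ.IsHermitian) (htσ : σ.trace = 1) :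
    ((ρ ⊗ₖ σ) * (((1 : ℂ) / 3) • (Qop + Wop + Rop))).trace.re =
      1 / 2 - inner ℝ (blochVector ρ) (blochVector σ) / 6 := by
  rw [Qop_add_Wop_add_Rop, smul_sub, smul_smul, smul_smul, mul_sub, trace_sub, Matrix.mul_smul,
    Matrix.mul_smul, mul_one, trace_smul, trace_smul, trace_kronecker, htρ, htσ, smul_eq_mul,
    smul_eq_mul, Complex.sub_re]
  norm_num [re_trace_kronecker_mul_pauliCorrelation hρ hσ]
  ring

/-- Every two-qubit product state satisfies `tr(ρ (Q+W+R)/3) ≤ 2/3`. -/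
theorem product_state_witness_bound (ρ1 ρ2 : Matrix (Fin 2) (Fin 2) ℂ)
    (h1 : ρ1.PosSemidef) (ht1 : ρ1.trace = 1)
    (h2 : ρ2.PosSemidef) (ht2 : ρ2.trace = 1) :
    (((ρ1 ⊗ₖ ρ2) * (((1 : ℂ)/3) • (Qop + Wop + Rop))).trace).re ≤ 2/3 := by
  rw [re_trace_kronecker_mul_witness h1.1 ht1 h2.1 ht2]
  have hinner := neg_le_of_abs_le (abs_real_inner_le_norm (blochVector ρ1) (blochVector ρ2))
  have hnorm := mul_le_one₀ (norm_blochVector_le_one h1 ht1) (norm_nonneg _)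
    (norm_blochVector_le_one h2 ht2)
  linarith
end

section
/- There is no two-qubit product state |a⟩⊗|b⟩ that is a simultaneous +1 eigenstate of all three projectors Q = (I-X⊗X)/2, W = (I-Y⊗Y)/2 and R = (I-Z⊗Z)/2. -/
open Matrix Kronecker

/-- The tensor product `|a⟩⊗|b⟩` of two single-qubit vectors. -/
def vecKron (a b : Fin 2 → ℂ) : Fin 2 × Fin 2 → ℂ := fun p => a p.1 * b p.2

/-- No two-qubit product state is a simultaneous `+1` eigenstate of `Q`, `W` and `R`. -/
theorem no_product_common_eigenstate :
    ¬ ∃ (a b : Fin 2 → ℂ), a ≠ 0 ∧ b ≠ 0 ∧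
      Qop.mulVec (vecKron a b) = vecKron a b ∧
      Wop.mulVec (vecKron a b) = vecKron a b ∧
      Rop.mulVec (vecKron a b) = vecKron a b := by
  rintro ⟨a, b, ha, hb, hQ, hW, hR⟩
  have hQ00 := congrFun hQ (0,0)
  have hQ01 := congrFun hQ (0,1)
  have hW00 := congrFun hW (0,0)
  have hW01 := congrFun hW (0,1)
  have hR00 := congrFun hR (0,0)
  have hR11 := congrFun hR (1,1)
  simp [Qop, Wop, Rop, PX, PY, PZ, Matrix.mulVec, dotProduct, vecKron,
    Fintype.sum_prod_type, Fin.sum_univ_succ, Matrix.one_apply, Prod.ext_iff, Prod.fst_zero, Prod.snd_zero, Prod.fst_one, Prod.snd_one, Fin.ext_iff] at hQ00 hQ01 hW00 hW01 hR00 hR11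
  have h1 : a 0 * b 0 = 0 := by linear_combination -hQ00 - hW00
  have h2 : a 1 * b 1 = 0 := by linear_combination hW00 - hQ00
  have h3 : a 1 * b 0 = -(a 0 * b 1) := by linear_combination -2 * hQ01
  have hbz : b 0 = 0 → b 1 = 0 → False := by
    intro h4 h5
    apply hb; funext i; fin_cases i <;> simp_all
  have haz : a 0 ≠ 0 ∨ a 1 ≠ 0 := by
    by_contra h; push_neg at h
    apply ha; funext i; fin_cases i <;> simp_all
  rcases haz with h | h
  · have hb0 : b 0 = 0 := by
      rcases mul_eq_zero.mp h1 with h' | h' <;> tauto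
    have hb1 : b 1 = 0 := by
      have : a 0 * b 1 = 0 := by rw [hb0, mul_zero] at h3; linear_combination h3
      rcases mul_eq_zero.mp this with h' | h' <;> tauto
    exact hbz hb0 hb1
  · have hb1 : b 1 = 0 := by
      rcases mul_eq_zero.mp h2 with h' | h' <;> tauto
    have hb0 : b 0 = 0 := by
      have : a 1 * b 0 = 0 := by rw [hb1, mul_zero] at h3; simpa using h3
      rcases mul_eq_zero.mp this with h' | h' <;> tauto
    exact hbz hb0 hb1
end

section
/- (McDiarmid's inequality / bounded differences inequality) Let x_1,...,x_N be independent random variables taking values in a set 𝒳, and let S : 𝒳^N → ℝ satisfy |S(x_1,...,x_k,...,x_N) - S(x_1,...,x'_k,...,x_N)| ≤ α_k for all inputs and all k. Then P[S - E[S] ≥ Q] ≤ exp(-2Q² / Σ_k α_k²) for all Q > 0. -/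
/-! Induct on `N`, conditioning on the first coordinate. With `m y` the average of
`S (Fin.cons y ·)` over the remaining coordinates, `S - 𝔼 S` splits as
`(m y - 𝔼 S) + (S (Fin.cons y u) - m y)`. The first summand ranges over an interval of length
`α 0`, so by Hoeffding's lemma it is sub-Gaussian with variance proxy `(α 0 / 2)²`; for each fixed
`y` the second is sub-Gaussian with proxy `∑_{k ≥ 1} (α k / 2)²` by induction, and Fubini makes
the proxies add. The Chernoff bound for a sub-Gaussian variable with proxy `∑ α k² / 4` is the
claimed tail bound. -/

open MeasureTheory ProbabilityTheory Real
open scoped NNReal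

theorem exists_forall_mem_Icc_of_abs_sub_le {β : Type*} [Nonempty β] {f : β → ℝ} {C : ℝ}
    (h : ∀ x y, |f x - f y| ≤ C) : ∃ a, ∀ x, f x ∈ Set.Icc a (a + C) := by
  obtain ⟨x₀⟩ := ‹Nonempty β›
  have hbdd : BddBelow (Set.range f) :=
    ⟨f x₀ - C, by rintro _ ⟨x, rfl⟩; linarith [(abs_le.mp (h x₀ x)).2]⟩
  refine ⟨⨅ x, f x, fun x => ⟨ciInf_le hbdd x, ?_⟩⟩
  have : f x - C ≤ ⨅ y, f y := le_ciInf fun y => by linarith [(abs_le.mp (h x y)).2]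
  linarith

def BoundedDifferences {ι 𝒳 : Type*} [DecidableEq ι] (S : (ι → 𝒳) → ℝ) (α : ι → ℝ) : Prop :=
  ∀ (v : ι → 𝒳) (k : ι) (y : 𝒳), |S v - S (Function.update v k y)| ≤ α k

namespace BoundedDifferences

variable {ι 𝒳 : Type*} [DecidableEq ι] {S : (ι → 𝒳) → ℝ} {α : ι → ℝ}

theorem abs_sub_le_sum [Fintype ι] (h : BoundedDifferences S α) (v w : ι → 𝒳) :
    |S v - S w| ≤ ∑ k, α k := by
  have key : ∀ s : Finset ι, |S v - S (s.piecewise w v)| ≤ ∑ k ∈ s, α k := by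
    intro s
    induction s using Finset.induction_on with
    | empty => simp
    | @insert j s hj ih =>
      rw [Finset.piecewise_insert, Finset.sum_insert hj]
      calc |S v - S (Function.update (s.piecewise w v) j (w j))|
          ≤ |S v - S (s.piecewise w v)|
            + |S (s.piecewise w v) - S (Function.update (s.piecewise w v) j (w j))| :=
            abs_sub_le _ _ _
        _ ≤ ∑ k ∈ s, α k + α j := add_le_add ih (h _ _ _)
        _ = α j + ∑ k ∈ s, α k := add_comm _ _
  simpa using key Finset.univ

theorem comp_cons {n : ℕ} {S : (Fin (n + 1) → 𝒳) → ℝ} {α : Fin (n + 1) → ℝ}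
    (h : BoundedDifferences S α) (y : 𝒳) :
    BoundedDifferences (fun u => S (Fin.cons y u)) (fun j => α j.succ) := by
  intro u j z
  change |S (Fin.cons y u) - S (Fin.cons y (Function.update u j z))| ≤ α j.succ
  rw [Fin.cons_update]
  exact h _ _ _

theorem abs_sub_cons_le {n : ℕ} {S : (Fin (n + 1) → 𝒳) → ℝ} {α : Fin (n + 1) → ℝ}
    (h : BoundedDifferences S α) (y y' : 𝒳) (u : Fin n → 𝒳) :
    |S (Fin.cons y u) - S (Fin.cons y' u)| ≤ α 0 := by
  simpa only [Fin.update_cons_zero] using h (Fin.cons y u) 0 y'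

theorem exists_forall_mem_Icc [Fintype ι] [Nonempty (ι → 𝒳)] (h : BoundedDifferences S α) :
    ∃ a, ∀ v, S v ∈ Set.Icc a (a + ∑ k, α k) :=
  exists_forall_mem_Icc_of_abs_sub_le h.abs_sub_le_sum

end BoundedDifferences

theorem measurePreserving_finCons {𝒳 : Type*} [MeasurableSpace 𝒳] {n : ℕ}
    (ν : Fin (n + 1) → Measure 𝒳) [∀ i, SigmaFinite (ν i)] :
    MeasurePreserving (fun p : 𝒳 × (Fin n → 𝒳) => (Fin.cons p.1 p.2 : Fin (n + 1) → 𝒳))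
      ((ν 0).prod (Measure.pi fun j => ν j.succ)) (Measure.pi ν) := by
  have h := (measurePreserving_piFinSuccAbove ν 0).symm
  simp only [Fin.succAbove_zero] at h
  convert h using 1
  ext p : 1
  simp [MeasurableEquiv.piFinSuccAbove_symm_apply, Fin.insertNthEquiv, Fin.insertNth_zero']

namespace ProbabilityTheory

variable {Ω Ω' : Type*} [MeasurableSpace Ω] [MeasurableSpace Ω']

theorem hasSubgaussianMGF_map_iff {μ : Measure Ω'} {Y : Ω' → Ω} {X : Ω → ℝ} {c : ℝ≥0}
    (hY : AEMeasurable Y μ) (hX : AEMeasurable X (μ.map Y)) :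
    HasSubgaussianMGF X c (μ.map Y) ↔ HasSubgaussianMGF (X ∘ Y) c μ := by
  rw [← HasSubgaussianMGF.id_map_iff hX, AEMeasurable.map_map_of_aemeasurable hX hY,
    HasSubgaussianMGF.id_map_iff (hX.comp_aemeasurable hY)]

theorem HasSubgaussianMGF.prod_of_forall_sub {μ : Measure Ω} {ν : Measure Ω'} [SFinite μ]
    [SFinite ν] {f : Ω × Ω' → ℝ} {g : Ω → ℝ} {c₁ c₂ : ℝ≥0}
    (hf : ∀ t, Integrable (fun p => exp (t * f p)) (μ.prod ν))
    (hg : HasSubgaussianMGF g c₁ μ) (hfg : ∀ a, HasSubgaussianMGF (fun b => f (a, b) - g a) c₂ ν) :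
    HasSubgaussianMGF f (c₁ + c₂) (μ.prod ν) where
  integrable_exp_mul := hf
  mgf_le t := calc
    mgf f (μ.prod ν) t = ∫ a, ∫ b, exp (t * f (a, b)) ∂ν ∂μ := integral_prod _ (hf t)
    _ = ∫ a, exp (t * g a) * mgf (fun b => f (a, b) - g a) ν t ∂μ := by
      congr 1 with a
      rw [mgf, ← integral_const_mul]
      congr 1 with b
      rw [← exp_add]
      ring_nf
    _ ≤ ∫ a, exp (t * g a) * exp (c₂ * t ^ 2 / 2) ∂μ :=
      integral_mono_of_nonneg (ae_of_all _ fun a => mul_nonneg (exp_nonneg _) mgf_nonneg)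
        ((hg.integrable_exp_mul t).mul_const _)
        (ae_of_all _ fun a => mul_le_mul_of_nonneg_left ((hfg a).mgf_le t) (exp_nonneg _))
    _ = mgf g μ t * exp (c₂ * t ^ 2 / 2) := integral_mul_const _ _
    _ ≤ exp (c₁ * t ^ 2 / 2) * exp (c₂ * t ^ 2 / 2) := by gcongr; exact hg.mgf_le t
    _ = exp ((c₁ + c₂ : ℝ≥0) * t ^ 2 / 2) := by rw [← exp_add]; push_cast; ring_nf

end ProbabilityTheory

namespace BoundedDifferences

variable {𝒳 : Type*} [MeasurableSpace 𝒳]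

theorem hasSubgaussianMGF_integral_cons_sub {n : ℕ} {ν : Fin (n + 1) → Measure 𝒳}
    [∀ i, IsProbabilityMeasure (ν i)] {S : (Fin (n + 1) → 𝒳) → ℝ} {α : Fin (n + 1) → ℝ}
    (hS : Measurable S) (h : BoundedDifferences S α) :
    HasSubgaussianMGF
      (fun y => ∫ u, S (Fin.cons y u) ∂Measure.pi (fun j => ν j.succ) - ∫ w, S w ∂Measure.pi ν)
      ((‖α 0‖₊ / 2) ^ 2) (ν 0) := by
  set P := Measure.pi fun j : Fin n => ν j.succ
  set m : 𝒳 → ℝ := fun y => ∫ u, S (Fin.cons y u) ∂P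
  have hcons := measurePreserving_finCons ν
  have hSc : Measurable fun p : 𝒳 × (Fin n → 𝒳) => S (Fin.cons p.1 p.2) :=
    hS.comp hcons.measurable
  have : Nonempty 𝒳 := nonempty_of_isProbabilityMeasure (ν 0)
  obtain ⟨s₀, hs₀⟩ := h.exists_forall_mem_Icc
  have hint_sec (y : 𝒳) : Integrable (fun u => S (Fin.cons y u)) P :=
    .of_mem_Icc _ _ (hSc.comp measurable_prodMk_left).aemeasurable (ae_of_all _ fun u => hs₀ _)
  have hES : ∫ w, S w ∂Measure.pi ν = ∫ y, m y ∂ν 0 := by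
    rw [← hcons.map_eq, integral_map hcons.measurable.aemeasurable hS.aestronglyMeasurable,
      integral_prod _ (.of_mem_Icc _ _ hSc.aemeasurable (ae_of_all _ fun p => hs₀ _))]
  have hm_osc (y y' : 𝒳) : |m y - m y'| ≤ α 0 := by
    rw [← integral_sub (hint_sec y) (hint_sec y')]
    simpa using norm_integral_le_of_norm_le_const
      (ae_of_all P fun u => (Real.norm_eq_abs _).trans_le (h.abs_sub_cons_le y y' u))
  obtain ⟨m₀, hm₀⟩ := exists_forall_mem_Icc_of_abs_sub_le hm_osc
  have hm : Measurable m := hSc.stronglyMeasurable.integral_prod_right'.measurable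
  rw [hES, ← add_sub_cancel_left m₀ (α 0)]
  exact hasSubgaussianMGF_of_mem_Icc hm.aemeasurable (ae_of_all _ hm₀)

theorem hasSubgaussianMGF_sub_integral {N : ℕ} {ν : Fin N → Measure 𝒳}
    [∀ i, IsProbabilityMeasure (ν i)] {S : (Fin N → 𝒳) → ℝ} {α : Fin N → ℝ}
    (hS : Measurable S) (h : BoundedDifferences S α) :
    HasSubgaussianMGF (fun v => S v - ∫ w, S w ∂Measure.pi ν) (∑ k, (‖α k‖₊ / 2) ^ 2)
      (Measure.pi ν) := by
  induction N with
  | zero =>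
    have hS0 : (fun v => S v - ∫ w, S w ∂Measure.pi ν) = fun _ => 0 := by
      ext v
      simp [integral_unique, Subsingleton.elim v default]
    simp [hS0]
  | succ n ih =>
    set ES := ∫ w, S w ∂Measure.pi ν
    have hcons := measurePreserving_finCons ν
    have hSc : Measurable fun p : 𝒳 × (Fin n → 𝒳) => S (Fin.cons p.1 p.2) :=
      hS.comp hcons.measurable
    have : Nonempty 𝒳 := nonempty_of_isProbabilityMeasure (ν 0)
    obtain ⟨s₀, hs₀⟩ := h.exists_forall_mem_Icc
    have hint (t : ℝ) : Integrable (fun p => exp (t * (S (Fin.cons p.1 p.2) - ES)))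
        ((ν 0).prod (Measure.pi fun j => ν j.succ)) :=
      integrable_exp_mul_of_mem_Icc (a := s₀ - ES) (b := s₀ + ∑ k, α k - ES)
        (hSc.sub_const ES).aemeasurable
        (ae_of_all _ fun p => ⟨sub_le_sub_right (hs₀ _).1 ES, sub_le_sub_right (hs₀ _).2 ES⟩)
    have hsec (y : 𝒳) := ih (ν := fun j => ν j.succ)
      (hS.comp (hcons.measurable.comp measurable_prodMk_left)) (h.comp_cons y)
    rw [← hcons.map_eq, hasSubgaussianMGF_map_iff hcons.measurable.aemeasurable
      (hS.sub_const _).aemeasurable, Fin.sum_univ_succ]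
    refine (h.hasSubgaussianMGF_integral_cons_sub hS).prod_of_forall_sub hint
      fun y => (hsec y).congr (ae_of_all _ fun u => ?_)
    simp only [Function.comp_apply]
    ring

end BoundedDifferences

theorem mcdiarmid_general {Ω 𝒳 : Type*} [MeasurableSpace Ω] [MeasurableSpace 𝒳]
    (μ : Measure Ω) [IsProbabilityMeasure μ] (N : ℕ)
    (x : Fin N → Ω → 𝒳) (hmeas : ∀ i, Measurable (x i))
    (hind : iIndepFun x μ)
    (S : (Fin N → 𝒳) → ℝ) (hS : Measurable S)
    (α : Fin N → ℝ)
    (hbd : ∀ (v : Fin N → 𝒳) (k : Fin N) (y : 𝒳),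
      |S v - S (Function.update v k y)| ≤ α k)
    (Q : ℝ) (hQ : 0 < Q) :
    (μ {ω | Q ≤ S (fun i => x i ω) - μ[fun ω => S (fun i => x i ω)]}).toReal ≤
      Real.exp (-2 * Q ^ 2 / ∑ k, (α k) ^ 2) := by
  have : ∀ i, IsProbabilityMeasure (μ.map (x i)) :=
    fun i => Measure.isProbabilityMeasure_map (hmeas i).aemeasurable
  have hφ : Measurable fun ω i => x i ω := measurable_pi_lambda _ hmeas
  have hmap := hind.map_fun_eq_pi_map fun i => (hmeas i).aemeasurable
  have hE : μ[fun ω => S (fun i => x i ω)] = ∫ v, S v ∂Measure.pi fun i => μ.map (x i) := by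
    rw [← hmap, integral_map hφ.aemeasurable hS.aestronglyMeasurable]
  have hsub := BoundedDifferences.hasSubgaussianMGF_sub_integral (ν := fun i => μ.map (x i)) hS hbd
  rw [← hE, ← hmap, hasSubgaussianMGF_map_iff hφ.aemeasurable (hS.sub_const _).aemeasurable]
    at hsub
  calc (μ {ω | Q ≤ S (fun i => x i ω) - μ[fun ω => S (fun i => x i ω)]}).toReal
      ≤ exp (-Q ^ 2 / (2 * ((∑ k, (‖α k‖₊ / 2) ^ 2 : ℝ≥0) : ℝ))) := hsub.measure_ge_le hQ.le
    _ = exp (-2 * Q ^ 2 / ∑ k, α k ^ 2) := by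
      -- also when `∑ k, α k ^ 2 = 0`: both exponents are then `0` by division by zero
      push_cast
      simp only [Real.norm_eq_abs, div_pow, sq_abs, ← Finset.sum_div]
      ring_nf

/-- McDiarmid's inequality (bounded differences inequality). -/
theorem mcdiarmid {Ω 𝒳 : Type*} [MeasurableSpace Ω] [MeasurableSpace 𝒳]
    (μ : Measure Ω) [IsProbabilityMeasure μ] (N : ℕ)
    (x : Fin N → Ω → 𝒳) (hmeas : ∀ i, Measurable (x i))
    (hind : iIndepFun x μ)
    (S : (Fin N → 𝒳) → ℝ) (hS : Measurable S)
    (α : Fin N → ℝ) (hα : ∀ k, 0 < α k)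
    (hbd : ∀ (v : Fin N → 𝒳) (k : Fin N) (y : 𝒳),
      |S v - S (Function.update v k y)| ≤ α k)
    (Q : ℝ) (hQ : 0 < Q) :
    (μ {ω | Q ≤ S (fun i => x i ω) - μ[fun ω => S (fun i => x i ω)]}).toReal ≤
      Real.exp (-2 * Q ^ 2 / ∑ k, (α k) ^ 2) :=
  mcdiarmid_general μ N x hmeas hind S hS α hbd Q hQ
end
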